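/- Let g = diag(a₁,...,a_n) ∈ SL_n(ℝ) with a₁ ≥ ... ≥ a_n > 0. If the projective transformation [g] restricted to some nonempty open subset O of ℙ^{n-1}(ℝ) is ε-Lipschitz for some ε < 1, then a₂/a₁ ≤ ε/√(1-ε²). -/
import Mathlib


open scoped BigOperators

/-- The Euclidean norm on `ℝⁿ`. -/
noncomputable def eucNorm (n : ℕ) (v : Fin n → ℝ) : ℝ := Real.sqrt (∑ i, v i ^ 2)

/-- The Euclidean norm of the wedge product `v ∧ w` in `Λ²ℝⁿ`. -/
noncomputable def wedgeNorm (n : ℕ) (v w : Fin n → ℝ) : ℝ :=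
  Real.sqrt ((∑ i, ∑ j, (v i * w j - v j * w i) ^ 2) / 2)

/-- The standard metric on `ℙ^{n-1}(ℝ)`: `d([v],[w]) = ‖v ∧ w‖ / (‖v‖‖w‖)`. -/
noncomputable def projDist (n : ℕ) (v w : Fin n → ℝ) : ℝ :=
  wedgeNorm n v w / (eucNorm n v * eucNorm n w)

/-- The distance from a point `[v]` of `ℙ^{n-1}(ℝ)` to the projectivization of a set `H`
of nonzero vectors. -/
noncomputable def projDistSet (n : ℕ) (v : Fin n → ℝ) (H : Set (Fin n → ℝ)) : ℝ :=
  sInf {d | ∃ w, w ≠ 0 ∧ w ∈ H ∧ d = projDist n v w}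

lemma lagrange (n : ℕ) (v w : Fin n → ℝ) :
    ∑ i, ∑ j, (v i * w j - v j * w i) ^ 2 =
      2 * ((∑ i, v i ^ 2) * (∑ i, w i ^ 2) - (∑ i, v i * w i) ^ 2) := by
  have h : ∀ i j : Fin n, (v i * w j - v j * w i) ^ 2 =
      v i ^ 2 * w j ^ 2 + w i ^ 2 * v j ^ 2 - (2 * (v i * w i)) * (v j * w j) := by
    intro i j; ring
  simp_rw [h, Finset.sum_sub_distrib, Finset.sum_add_distrib, ← Finset.mul_sum]
  rw [← Finset.sum_mul, ← Finset.sum_mul, ← Finset.sum_mul,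
    show (∑ x : Fin n, 2 * (v x * w x)) = 2 * ∑ x : Fin n, v x * w x from by
      rw [Finset.mul_sum]]
  ring

lemma sq_sum_pos {n : ℕ} (f : Fin n → ℝ) (hf : f ≠ 0) : 0 < ∑ i, f i ^ 2 := by
  obtain ⟨j, hj⟩ := Function.ne_iff.1 hf
  exact Finset.sum_pos' (fun i _ => sq_nonneg _)
    ⟨j, Finset.mem_univ _, by exact pow_pos (abs_pos.mpr hj) 2 |>.trans_le (by rw [sq_abs])⟩

lemma projDist_eq (n : ℕ) (v w : Fin n → ℝ) :
    projDist n v w = Real.sqrt ((∑ i, v i ^ 2) * (∑ i, w i ^ 2) - (∑ i, v i * w i) ^ 2) /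
      (Real.sqrt (∑ i, v i ^ 2) * Real.sqrt (∑ i, w i ^ 2)) := by
  unfold projDist wedgeNorm eucNorm
  rw [lagrange]
  norm_num

lemma sum_pair' {n : ℕ} (i0 i1 : Fin n) (hne : i0 ≠ i1) (f : Fin n → ℝ)
    (hf : ∀ i, i ≠ i0 → i ≠ i1 → f i = 0) : ∑ i, f i = f i0 + f i1 := by
  rw [← Finset.sum_pair hne]
  refine (Finset.sum_subset (Finset.subset_univ _) fun x _ hx => ?_).symm
  simp only [Finset.mem_insert, Finset.mem_singleton, not_or] at hx
  exact hf x hx.1 hx.2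


set_option maxHeartbeats 1000000 in
/-- If a diagonal `g = diag(a₁,…,aₙ) ∈ SL_n(ℝ)` with decreasing positive diagonal acts
`ε`-Lipschitz (for some `ε < 1`) on some nonempty open set of nonzero vectors (i.e. on a
nonempty open subset of `ℙ^{n-1}(ℝ)`), then `a₂/a₁ ≤ ε/√(1-ε²)`. -/
theorem stmt13 (n : ℕ) (hn : 2 ≤ n) (a : Fin n → ℝ) (hpos : ∀ i, 0 < a i)
    (hmono : ∀ i j : Fin n, i ≤ j → a j ≤ a i) (hdet : ∏ i, a i = 1)
    (ε : ℝ) (hε0 : 0 ≤ ε) (hε1 : ε < 1)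
    (O : Set (Fin n → ℝ)) (hO : IsOpen O) (hne : O.Nonempty) (hOnz : ∀ v ∈ O, v ≠ 0)
    (hLip : ∀ v ∈ O, ∀ w ∈ O,
      projDist n (fun i => a i * v i) (fun i => a i * w i) ≤ ε * projDist n v w) :
    a ⟨1, by omega⟩ / a ⟨0, by omega⟩ ≤ ε / Real.sqrt (1 - ε ^ 2) := by
  suffices H : ∀ (i0 i1 : Fin n), i0.val = 0 → i1.val = 1 →
      a i1 / a i0 ≤ ε / Real.sqrt (1 - ε ^ 2) by
    exact H ⟨0, by omega⟩ ⟨1, by omega⟩ rfl rfl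
  intro i0 i1 h0v h1v
  have hne01 : i0 ≠ i1 := by
    intro h; rw [Fin.ext_iff, h0v, h1v] at h; omega
  have hi01 : i0 ≤ i1 := by rw [Fin.le_def, h0v, h1v]; omega
  have ha10 : a i1 ≤ a i0 := hmono i0 i1 hi01
  have hgne : ∀ x : Fin n → ℝ, x ≠ 0 → (fun i => a i * x i) ≠ 0 := by
    intro x hx h
    apply hx; funext i
    have h2 := congrFun h i
    simp only [Pi.zero_apply] at h2 ⊢
    rcases mul_eq_zero.1 h2 with h3 | h3
    · exact absurd h3 (ne_of_gt (hpos i))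
    · exact h3
  -- find a point of O whose first two coordinates are not both zero
  obtain ⟨v, hv, hu⟩ : ∃ v ∈ O, 0 < v i0 ^ 2 + v i1 ^ 2 := by
    obtain ⟨v0, hv0⟩ := hne
    by_cases h : v0 i0 = 0
    · obtain ⟨r, hr, hball⟩ := Metric.isOpen_iff.1 hO v0 hv0
      refine ⟨Function.update v0 i0 (r / 2), hball ?_, ?_⟩
      · rw [Metric.mem_ball, dist_pi_lt_iff hr]
        intro b
        rcases eq_or_ne b i0 with rfl | hb
        · rw [Function.update_self, h, Real.dist_eq, sub_zero,
            abs_of_pos (by linarith only [hr])]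
          linarith only [hr]
        · rw [Function.update_of_ne hb, dist_self]; exact hr
      · have h1 : Function.update v0 i0 (r / 2) i0 = r / 2 := Function.update_self _ _ _
        rw [h1]
        nlinarith only [sq_nonneg (Function.update v0 i0 (r / 2) i1), hr]
    · have h2 := pow_pos (abs_pos.mpr h) 2
      rw [sq_abs] at h2
      exact ⟨v0, hv0, by linarith only [sq_nonneg (v0 i1), h2]⟩
  have hv0 := hOnz v hv
  obtain ⟨r, hr, hball⟩ := Metric.isOpen_iff.1 hO v hv
  obtain ⟨Nv, hNvdef⟩ : ∃ x : ℝ, x = ∑ i, v i ^ 2 := ⟨_, rfl⟩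
  have hNv : 0 < Nv := hNvdef ▸ sq_sum_pos v hv0
  obtain ⟨Ng, hNgdef⟩ : ∃ x : ℝ, x = ∑ i, (a i * v i) ^ 2 := ⟨_, rfl⟩
  have hNg : 0 < Ng := by
    rw [hNgdef]
    have := sq_sum_pos _ (hgne v hv0)
    simpa using this
  obtain ⟨e, hedef⟩ : ∃ e : Fin n → ℝ,
      e = fun i => if i = i0 then -(v i1) else if i = i1 then v i0 else 0 := ⟨_, rfl⟩
  have he0 : e i0 = -(v i1) := by rw [hedef]; simp
  have he1 : e i1 = v i0 := by rw [hedef]; simp [hne01.symm]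
  have heo : ∀ i, i ≠ i0 → i ≠ i1 → e i = 0 := fun i h1 h2 => by rw [hedef]; simp [h1, h2]
  obtain ⟨u2, hu2def⟩ : ∃ x : ℝ, x = v i0 ^ 2 + v i1 ^ 2 := ⟨_, rfl⟩
  have hu2 : 0 < u2 := hu2def ▸ hu
  have hsum_e : ∑ i, e i ^ 2 = u2 := by
    rw [sum_pair' i0 i1 hne01 _ (fun i h1 h2 => by rw [heo i h1 h2]; ring), he0, he1, hu2def]
    ring
  have hsum_ve : ∑ i, v i * e i = 0 := by
    rw [sum_pair' i0 i1 hne01 _ (fun i h1 h2 => by rw [heo i h1 h2]; ring), he0, he1]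
    ring
  obtain ⟨c, hcdef⟩ : ∃ x : ℝ, x = (a i1 ^ 2 - a i0 ^ 2) * (v i0 * v i1) := ⟨_, rfl⟩
  have hsum_c : ∑ i, (a i * v i) * (a i * e i) = c := by
    rw [sum_pair' i0 i1 hne01 _ (fun i h1 h2 => by rw [heo i h1 h2]; ring), he0, he1, hcdef]
    ring
  obtain ⟨Nge, hNgedef⟩ : ∃ x : ℝ, x = a i0 ^ 2 * v i1 ^ 2 + a i1 ^ 2 * v i0 ^ 2 := ⟨_, rfl⟩
  have hNge : 0 ≤ Nge := by rw [hNgedef]; positivity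
  have hsum_ge : ∑ i, (a i * e i) ^ 2 = Nge := by
    rw [sum_pair' i0 i1 hne01 _ (fun i h1 h2 => by rw [heo i h1 h2]; ring), he0, he1, hNgedef]
    ring
  obtain ⟨B, hBdef⟩ : ∃ x : ℝ, x = Ng * Nge - c ^ 2 := ⟨_, rfl⟩
  have hsq10 : a i1 ^ 2 ≤ a i0 ^ 2 := by nlinarith only [hpos i1, ha10]
  have hgs : a i0 ^ 2 * v i0 ^ 2 ≤ Ng := by
    have h1 : (a i0 * v i0) ^ 2 ≤ ∑ i, (a i * v i) ^ 2 :=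
      Finset.single_le_sum (f := fun i => (a i * v i) ^ 2)
        (fun i _ => sq_nonneg _) (Finset.mem_univ i0)
    rw [hNgdef]
    linarith only [h1]
  have hBge : a i1 ^ 2 * u2 * Ng ≤ B := by
    have h1 : 0 ≤ (a i0 ^ 2 - a i1 ^ 2) * v i1 ^ 2 *
        (Ng - (a i0 ^ 2 - a i1 ^ 2) * v i0 ^ 2) := by
      apply mul_nonneg (mul_nonneg (by linarith) (sq_nonneg _))
      linarith only [hgs, sq_nonneg (a i1 * v i0)]
    have hB2 : B - a i1 ^ 2 * u2 * Ng =
        (a i0 ^ 2 - a i1 ^ 2) * v i1 ^ 2 * (Ng - (a i0 ^ 2 - a i1 ^ 2) * v i0 ^ 2) := by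
      rw [hBdef, hNgedef, hcdef, hu2def]; ring
    linarith only [h1, hB2]
  have hB0 : 0 ≤ B :=
    le_trans (mul_nonneg (mul_nonneg (sq_nonneg _) hu2.le) hNg.le) hBge
  have hNgle : Ng ≤ a i0 ^ 2 * Nv := by
    rw [hNgdef, hNvdef, Finset.mul_sum]
    refine Finset.sum_le_sum fun i _ => ?_
    have h1 : a i ≤ a i0 := hmono i0 i (by rw [Fin.le_def, h0v]; omega)
    have h2 : a i ^ 2 ≤ a i0 ^ 2 := by nlinarith only [hpos i, h1]
    calc (a i * v i) ^ 2 = a i ^ 2 * v i ^ 2 := by ring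
      _ ≤ a i0 ^ 2 * v i ^ 2 := mul_le_mul_of_nonneg_right h2 (sq_nonneg _)
  obtain ⟨K, hKdef⟩ : ∃ x : ℝ, x = 2 * |c| + Nge := ⟨_, rfl⟩
  have hK : 0 ≤ K := by rw [hKdef]; linarith only [abs_nonneg c, hNge]
  obtain ⟨M, hMdef⟩ : ∃ x : ℝ, x = |v i0| + |v i1| + 1 := ⟨_, rfl⟩
  have hM : 0 < M := by
    rw [hMdef]; linarith only [abs_nonneg (v i0), abs_nonneg (v i1)]
  have heb : ∀ b, |e b| ≤ M := by
    intro b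
    by_cases hb0 : b = i0
    · rw [hb0, he0, abs_neg, hMdef]
      linarith only [abs_nonneg (v i0), abs_nonneg (v i1)]
    by_cases hb1 : b = i1
    · rw [hb1, he1, hMdef]
      linarith only [abs_nonneg (v i0), abs_nonneg (v i1)]
    · rw [heo b hb0 hb1, hMdef, abs_zero]
      linarith only [abs_nonneg (v i0), abs_nonneg (v i1)]
  -- the key inequality for each small positive t
  have main : ∀ t : ℝ, 0 < t → t ≤ 1 → t * M < r →
      a i1 ^ 2 * Nv ≤ ε ^ 2 * (Ng + t * K) := by
    intro t ht ht1 htr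
    obtain ⟨w, hwdef⟩ : ∃ w : Fin n → ℝ, w = fun i => v i + t * e i := ⟨_, rfl⟩
    have hwi : ∀ i, w i = v i + t * e i := fun i => by rw [hwdef]
    have hwO : w ∈ O := by
      apply hball
      rw [Metric.mem_ball, dist_pi_lt_iff hr]
      intro b
      rw [Real.dist_eq, show w b - v b = t * e b from by rw [hwi]; ring,
        abs_mul, abs_of_pos ht]
      calc t * |e b| ≤ t * M := mul_le_mul_of_nonneg_left (heb b) ht.le
        _ < r := htr
    have hw0 : w ≠ 0 := hOnz w hwO
    have hNw : ∑ i, w i ^ 2 = Nv + t ^ 2 * u2 := by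
      calc ∑ i, w i ^ 2 = ∑ i, (v i ^ 2 + (2 * t) * (v i * e i) + t ^ 2 * e i ^ 2) :=
            Finset.sum_congr rfl fun i _ => by rw [hwi]; ring
        _ = (∑ i, v i ^ 2) + (2 * t) * 0 + t ^ 2 * u2 := by
            rw [Finset.sum_add_distrib, Finset.sum_add_distrib, ← Finset.mul_sum,
              ← Finset.mul_sum, hsum_ve, hsum_e]
        _ = Nv + t ^ 2 * u2 := by rw [← hNvdef]; ring
    have hvw : ∑ i, v i * w i = Nv := by
      calc ∑ i, v i * w i = ∑ i, (v i ^ 2 + t * (v i * e i)) :=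
            Finset.sum_congr rfl fun i _ => by rw [hwi]; ring
        _ = (∑ i, v i ^ 2) + t * 0 := by
            rw [Finset.sum_add_distrib, ← Finset.mul_sum, hsum_ve]
        _ = Nv := by rw [← hNvdef]; ring
    have hNgw : ∑ i, (a i * w i) ^ 2 = Ng + 2 * t * c + t ^ 2 * Nge := by
      calc ∑ i, (a i * w i) ^ 2
          = ∑ i, ((a i * v i) ^ 2 + (2 * t) * ((a i * v i) * (a i * e i))
              + t ^ 2 * (a i * e i) ^ 2) :=
            Finset.sum_congr rfl fun i _ => by rw [hwi]; ring
        _ = (∑ i, (a i * v i) ^ 2) + (2 * t) * c + t ^ 2 * Nge := by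
            rw [Finset.sum_add_distrib, Finset.sum_add_distrib, ← Finset.mul_sum,
              ← Finset.mul_sum, hsum_c, hsum_ge]
        _ = Ng + 2 * t * c + t ^ 2 * Nge := by rw [← hNgdef]
    have hgvw : ∑ i, (a i * v i) * (a i * w i) = Ng + t * c := by
      calc ∑ i, (a i * v i) * (a i * w i)
          = ∑ i, ((a i * v i) ^ 2 + t * ((a i * v i) * (a i * e i))) :=
            Finset.sum_congr rfl fun i _ => by rw [hwi]; ring
        _ = (∑ i, (a i * v i) ^ 2) + t * c := by
            rw [Finset.sum_add_distrib, ← Finset.mul_sum, hsum_c]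
        _ = Ng + t * c := by rw [← hNgdef]
    have hNgw' : 0 < Ng + 2 * t * c + t ^ 2 * Nge := by
      rw [← hNgw]
      have := sq_sum_pos _ (hgne w hw0)
      simpa using this
    have hNw' : 0 < Nv + t ^ 2 * u2 := by
      linarith only [mul_nonneg (sq_nonneg t) hu2.le, hNv]
    have hlip := hLip v hv w hwO
    simp only [projDist_eq, hNw, hvw, hNgw, hgvw, ← hNvdef, ← hNgdef] at hlip
    rw [show Ng * (Ng + 2 * t * c + t ^ 2 * Nge) - (Ng + t * c) ^ 2 = t ^ 2 * B from by
        rw [hBdef]; ring,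
      show Nv * (Nv + t ^ 2 * u2) - Nv ^ 2 = t ^ 2 * (u2 * Nv) from by ring] at hlip
    rw [Real.sqrt_mul (sq_nonneg t) B, Real.sqrt_mul (sq_nonneg t) (u2 * Nv),
      Real.sqrt_sq ht.le, Real.sqrt_mul hu2.le] at hlip
    obtain ⟨s1, hs1d⟩ : ∃ x : ℝ, x = Real.sqrt u2 := ⟨_, rfl⟩
    obtain ⟨s2, hs2d⟩ : ∃ x : ℝ, x = Real.sqrt Ng := ⟨_, rfl⟩
    obtain ⟨s3, hs3d⟩ : ∃ x : ℝ, x = Real.sqrt Nv := ⟨_, rfl⟩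
    obtain ⟨s4, hs4d⟩ : ∃ x : ℝ, x = Real.sqrt (Nv + t ^ 2 * u2) := ⟨_, rfl⟩
    obtain ⟨s5, hs5d⟩ : ∃ x : ℝ, x = Real.sqrt (Ng + 2 * t * c + t ^ 2 * Nge) := ⟨_, rfl⟩
    obtain ⟨sB, hsBd⟩ : ∃ x : ℝ, x = Real.sqrt B := ⟨_, rfl⟩
    rw [← hs1d, ← hs2d, ← hs3d, ← hs4d, ← hs5d, ← hsBd] at hlip
    have hs1p : 0 < s1 := hs1d ▸ Real.sqrt_pos.2 hu2
    have hs2p : 0 < s2 := hs2d ▸ Real.sqrt_pos.2 hNg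
    have hs3p : 0 < s3 := hs3d ▸ Real.sqrt_pos.2 hNv
    have hs4p : 0 < s4 := hs4d ▸ Real.sqrt_pos.2 hNw'
    have hs5p : 0 < s5 := hs5d ▸ Real.sqrt_pos.2 hNgw'
    have hsBn : 0 ≤ sB := hsBd ▸ Real.sqrt_nonneg _
    rw [← mul_div_assoc, div_le_div_iff₀ (mul_pos hs2p hs5p) (mul_pos hs3p hs4p)] at hlip
    -- hlip : t * sB * (s3 * s4) ≤ ε * (t * (s1 * s3)) * (s2 * s5)
    have f1 : a i1 * (s1 * s2) ≤ sB := by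
      have he : Real.sqrt (a i1 ^ 2 * u2 * Ng) = a i1 * (s1 * s2) := by
        rw [show a i1 ^ 2 * u2 * Ng = (a i1 * (s1 * s2)) ^ 2 from by
          rw [mul_pow, mul_pow, hs1d, hs2d, Real.sq_sqrt hu2.le, Real.sq_sqrt hNg.le]; ring]
        exact Real.sqrt_sq
          (mul_nonneg (hpos i1).le (mul_nonneg hs1p.le hs2p.le))
      rw [← he, hsBd]
      exact Real.sqrt_le_sqrt hBge
    have f2 : s3 ≤ s4 := by
      rw [hs3d, hs4d]
      exact Real.sqrt_le_sqrt (by linarith only [mul_nonneg (sq_nonneg t) hu2.le])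
    obtain ⟨s6, hs6d⟩ : ∃ x : ℝ, x = Real.sqrt (Ng + t * K) := ⟨_, rfl⟩
    have hNK : 0 ≤ Ng + t * K := by linarith only [mul_nonneg ht.le hK, hNg]
    have f3 : s5 ≤ s6 := by
      rw [hs5d, hs6d]
      apply Real.sqrt_le_sqrt
      rw [hKdef]
      linarith only [mul_le_mul_of_nonneg_left (le_abs_self c) ht.le,
        mul_nonneg (mul_nonneg ht.le (by linarith only [ht1] : (0:ℝ) ≤ 1 - t)) hNge]
    have hs6n : 0 ≤ s6 := hs6d ▸ Real.sqrt_nonneg _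
    have step : a i1 * s3 ≤ ε * s6 := by
      have h1 : (t * (s1 * s2 * s3)) * (a i1 * s3) ≤ (t * (s1 * s2 * s3)) * (ε * s6) := by
        calc (t * (s1 * s2 * s3)) * (a i1 * s3)
            = (t * (a i1 * (s1 * s2))) * (s3 * s3) := by ring
          _ ≤ (t * sB) * (s3 * s4) := by
              apply mul_le_mul (mul_le_mul_of_nonneg_left f1 ht.le)
                (mul_le_mul_of_nonneg_left f2 hs3p.le)
                (mul_nonneg hs3p.le hs3p.le)
                (mul_nonneg ht.le hsBn)
          _ ≤ ε * (t * (s1 * s3)) * (s2 * s5) := hlip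
          _ = (ε * t * s1 * s3 * s2) * s5 := by ring
          _ ≤ (ε * t * s1 * s3 * s2) * s6 := by
              apply mul_le_mul_of_nonneg_left f3
              exact mul_nonneg (mul_nonneg (mul_nonneg
                (mul_nonneg hε0 ht.le) hs1p.le) hs3p.le) hs2p.le
          _ = (t * (s1 * s2 * s3)) * (ε * s6) := by ring
      exact le_of_mul_le_mul_left h1
        (mul_pos ht (mul_pos (mul_pos hs1p hs2p) hs3p))
    have hsq : (a i1 * s3) ^ 2 ≤ (ε * s6) ^ 2 :=
      pow_le_pow_left₀ (mul_nonneg (hpos i1).le hs3p.le) step 2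
    rw [mul_pow, mul_pow, hs3d, hs6d, Real.sq_sqrt hNv.le, Real.sq_sqrt hNK] at hsq
    exact hsq
  -- pass to the limit t → 0⁺
  have lim : a i1 ^ 2 * Nv ≤ ε ^ 2 * Ng := by
    apply le_of_forall_pos_le_add
    intro δ hδ
    have hd1 : 0 < ε ^ 2 * K + 1 := by linarith only [mul_nonneg (sq_nonneg ε) hK]
    obtain ⟨t, htdef⟩ : ∃ x : ℝ, x = min (min 1 (r / (2 * M))) (δ / (ε ^ 2 * K + 1)) :=
      ⟨_, rfl⟩
    have ht : 0 < t := by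
      rw [htdef]
      exact lt_min (lt_min one_pos (div_pos hr (by linarith only [hM]))) (div_pos hδ hd1)
    have ht1 : t ≤ 1 := htdef ▸ le_trans (min_le_left _ _) (min_le_left _ _)
    have htr : t * M < r := by
      have h1 : t ≤ r / (2 * M) := htdef ▸ le_trans (min_le_left _ _) (min_le_right _ _)
      have h2 : t * M ≤ (r / (2 * M)) * M := mul_le_mul_of_nonneg_right h1 hM.le
      have h3 : (r / (2 * M)) * M = r / 2 := by field_simp
      linarith only [h2, h3, hr]
    have h4 := main t ht ht1 htr
    have h5 : ε ^ 2 * K * t ≤ δ := by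
      have h6 : t ≤ δ / (ε ^ 2 * K + 1) := htdef ▸ min_le_right _ _
      have h7 : ε ^ 2 * K * t ≤ ε ^ 2 * K * (δ / (ε ^ 2 * K + 1)) :=
        mul_le_mul_of_nonneg_left h6 (mul_nonneg (sq_nonneg ε) hK)
      have h9 : (ε ^ 2 * K) / (ε ^ 2 * K + 1) ≤ 1 :=
        div_le_one_of_le₀ (by linarith only [mul_nonneg (sq_nonneg ε) hK]) hd1.le
      have h8 : ε ^ 2 * K * (δ / (ε ^ 2 * K + 1)) = δ * ((ε ^ 2 * K) / (ε ^ 2 * K + 1)) := by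
        ring
      have h10 := mul_le_mul_of_nonneg_left h9 hδ.le
      linarith only [h7, h8, h10]
    linarith only [h4, h5]
  -- conclude
  have h4 : a i1 ^ 2 ≤ ε ^ 2 * a i0 ^ 2 := by
    have h5 : ε ^ 2 * Ng ≤ ε ^ 2 * (a i0 ^ 2 * Nv) :=
      mul_le_mul_of_nonneg_left hNgle (sq_nonneg ε)
    nlinarith only [hNv, lim, h5]
  have key : a i1 ≤ ε * a i0 := by
    nlinarith only [h4, hpos i1, hpos i0, mul_nonneg hε0 (hpos i0).le]
  have hs : 0 < Real.sqrt (1 - ε ^ 2) := Real.sqrt_pos.2 (by nlinarith only [hε0, hε1])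
  have hsle : Real.sqrt (1 - ε ^ 2) ≤ 1 := by
    have h := Real.sqrt_le_sqrt (show 1 - ε ^ 2 ≤ 1 by linarith only [sq_nonneg ε])
    rwa [Real.sqrt_one] at h
  calc a i1 / a i0 ≤ ε := by rw [div_le_iff₀ (hpos i0)]; linarith only [key]
    _ ≤ ε / Real.sqrt (1 - ε ^ 2) := by
        rw [le_div_iff₀ hs]
        linarith only [mul_le_mul_of_nonneg_left hsle hε0]
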